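/- arXiv:1412.1686 — 5 statements merged into one kernel-verified Lean document; each statement's English description precedes it below -/
import Mathlib

section
/- Let F ∈ ℂ[x₀,…,xₙ] be a non-degenerate cubic form. Then the set W_F = {p ∈ ℙⁿ(ℂ) : rk 𝓗_F(p) ≤ 1} is finite. -/
/-!
The Hessian `H` of a cubic form is linear in the point, and `H(x) y = H(y) x`. Fix `y₀` with
`g = H(y₀)` invertible. If `rk H(p) ≤ 1`, the symmetric matrix `H(p)` has `H(p) y₀ = g p ≠ 0` in
its range, so `H(p) = γ (g p)(g p)ᵀ` with `γ ≠ 0`, and then `H(y) p = H(p) y = γ ⟨g p, y⟩ g p`: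
every such `p` is a common eigenvector of the operators `g⁻¹ H(y)`, with eigenvalue the linear
form `γ ⟨g p, ·⟩` in `y`. Distinct points of `ℙⁿ` give distinct linear forms, hence linearly
independent representatives, so there are at most `n + 1` of them.
-/

open MvPolynomial

noncomputable section

/-- The Hessian matrix of a multivariate polynomial `F`, evaluated at the point `x`. -/
def hess {m : ℕ} {R : Type*} [CommSemiring R] (F : MvPolynomial (Fin m) R)
    (x : Fin m → R) : Matrix (Fin m) (Fin m) R :=
  Matrix.of fun i j => eval x (pderiv i (pderiv j F))

/-- A polynomial is non-degenerate if the determinant of its Hessian is not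
identically zero. -/
def nondeg {m : ℕ} {R : Type*} [CommRing R] (F : MvPolynomial (Fin m) R) : Prop :=
  ∃ x, (hess F x).det ≠ 0

/-- The substitution action of a matrix on a polynomial: `(T · F)(x) = F (T.mulVec x)`. -/
def matAct {m : ℕ} {R : Type*} [CommSemiring R] (T : Matrix (Fin m) (Fin m) R)
    (F : MvPolynomial (Fin m) R) : MvPolynomial (Fin m) R :=
  bind₁ (fun i => ∑ j, C (T i j) * X j) F

/-- The projective hypersurface `{F = 0}` is smooth: the only common zero of the
partial derivatives of `F` is the origin. -/
def smoothHyp {m : ℕ} (F : MvPolynomial (Fin m) ℂ) : Prop :=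
  ∀ x : Fin m → ℂ, (∀ i, eval x (pderiv i F) = 0) → x = 0

/-- The polynomial `a·x₀³ + x₀²·(∑ᵢ bᵢ xᵢ) + G(x₁, …, xₙ)`. -/
def redPoly {m : ℕ} {R : Type*} [CommSemiring R] (a : R) (B : Fin m → R)
    (G : MvPolynomial (Fin m) R) : MvPolynomial (Fin (m + 1)) R :=
  C a * X 0 ^ 3 + X 0 ^ 2 * (∑ i, C (B i) * X i.succ) + rename Fin.succ G

/-- `(a, B, G)` is a reduced triple associated to `F`: `G` is a non-degenerate
cubic form and some `T ∈ SL(n+1, ℤ)` puts `F` in the reduced form `(a, B, G)`. -/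
def IsReducedTriple {n : ℕ} (F : MvPolynomial (Fin (n + 1)) ℤ)
    (a : ℤ) (B : Fin n → ℤ) (G : MvPolynomial (Fin n) ℤ) : Prop :=
  G.IsHomogeneous 3 ∧ nondeg G ∧
    ∃ T : Matrix (Fin (n + 1)) (Fin (n + 1)) ℤ, T.det = 1 ∧ matAct T F = redPoly a B G

/-- Equivalence of reduced triples over ℤ: `a = a'` and some `M ∈ SL(n, ℤ)`
carries `(B, G)` to `(B', G')`. -/
def TripleEquiv {n : ℕ} (a : ℤ) (B : Fin n → ℤ) (G : MvPolynomial (Fin n) ℤ)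
    (a' : ℤ) (B' : Fin n → ℤ) (G' : MvPolynomial (Fin n) ℤ) : Prop :=
  a = a' ∧ ∃ M : Matrix (Fin n) (Fin n) ℤ, M.det = 1 ∧ B' = M.mulVec B ∧ G' = matAct M G

namespace MvPolynomial

variable {R σ : Type*} [CommSemiring R]

theorem pderiv_pderiv_comm (i j : σ) (p : MvPolynomial σ R) :
    pderiv i (pderiv j p) = pderiv j (pderiv i p) := by
  classical
  ext m
  simp only [coeff_pderiv, Finsupp.add_apply, Finsupp.single_apply, add_right_comm m]
  rcases eq_or_ne i j with rfl | hij
  · rfl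
  · simp only [if_neg hij, if_neg hij.symm, add_zero]
    ring

theorem IsHomogeneous.eval_eq_sum_of_degree_one [Fintype σ] {P : MvPolynomial σ R}
    (hP : P.IsHomogeneous 1) (x : σ → R) :
    eval x P = ∑ k, x k * coeff 0 (pderiv k P) := by
  have hconst (k : σ) : pderiv k P = C (coeff 0 (pderiv k P)) :=
    totalDegree_eq_zero_iff_eq_C.mp ((totalDegree_zero_iff_isHomogeneous σ).mpr hP.pderiv)
  have heuler := congrArg (eval x) hP.sum_X_mul_pderiv
  simp only [one_smul, map_sum, map_mul, eval_X] at heuler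
  rw [← heuler]
  refine Finset.sum_congr rfl fun k _ => ?_
  rw [hconst k, eval_C, coeff_zero_C]

end MvPolynomial

open Matrix

theorem hess_isSymm {m : ℕ} {R : Type*} [CommSemiring R] (F : MvPolynomial (Fin m) R)
    (x : Fin m → R) : (hess F x).IsSymm :=
  Matrix.ext fun i j => congrArg (eval x) (pderiv_pderiv_comm j i F)

theorem hess_mulVec_comm {m : ℕ} {R : Type*} [CommSemiring R] {F : MvPolynomial (Fin m) R}
    (hF : F.IsHomogeneous 3) (x y : Fin m → R) : hess F x *ᵥ y = hess F y *ᵥ x := by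
  -- the third partials of a cubic are constants, so `H(z)ᵢⱼ = ∑ₖ zₖ Tᵢⱼₖ` (Euler's identity)
  set T : Fin m → Fin m → Fin m → R := fun i j k => coeff 0 (pderiv k (pderiv i (pderiv j F)))
  have hT (i j k : Fin m) : T i j k = T i k j := by
    simp only [T]
    rw [pderiv_pderiv_comm i j, pderiv_pderiv_comm k j, pderiv_pderiv_comm k i]
  have hhess (z : Fin m → R) (i j : Fin m) : hess F z i j = ∑ k, z k * T i j k :=
    (hF.pderiv.pderiv (n := 3 - 1)).eval_eq_sum_of_degree_one z
  ext i
  simp only [mulVec, dotProduct, hhess, Finset.sum_mul]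
  rw [Finset.sum_comm]
  refine Finset.sum_congr rfl fun j _ => Finset.sum_congr rfl fun k _ => ?_
  rw [hT]
  ring

theorem Matrix.IsSymm.exists_eq_smul_vecMulVec_of_rank_le_one {K n : Type*} [Field K]
    [Fintype n] [DecidableEq n] {M : Matrix n n K} (hM : M.IsSymm) (hrank : M.rank ≤ 1)
    {y : n → K} (hy : M *ᵥ y ≠ 0) :
    ∃ γ : K, γ ≠ 0 ∧ M = γ • vecMulVec (M *ᵥ y) (M *ᵥ y) := by
  set b := M *ᵥ y
  have hrange : K ∙ b = LinearMap.range M.mulVecLin :=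
    Submodule.eq_of_le_of_finrank_le
      ((Submodule.span_singleton_le_iff_mem _ _).mpr ⟨y, rfl⟩)
      (hrank.trans (finrank_span_singleton hy).ge)
  have hcol (l : n) : ∃ c : K, c • b = M *ᵥ Pi.single l 1 :=
    Submodule.mem_span_singleton.mp (hrange ▸ ⟨Pi.single l 1, rfl⟩)
  choose c hc using hcol
  have hentry (k l : n) : M k l = c l * b k := by
    simpa using congrFun (hc l) k |>.symm
  have hc_symm (k l : n) : c l * b k = c k * b l := by
    rw [← hentry, ← hentry, ← transpose_apply M, hM.eq]
  obtain ⟨k₀, hk₀⟩ : ∃ k₀, b k₀ ≠ 0 := Function.ne_iff.mp hy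
  have hM_eq : M = (c k₀ / b k₀) • vecMulVec b b := by
    ext k l
    rw [smul_apply, vecMulVec_apply, hentry, smul_eq_mul,
      eq_div_of_mul_eq hk₀ (hc_symm k₀ l)]
    ring
  refine ⟨c k₀ / b k₀, fun hγ => hy ?_, hM_eq⟩
  change M *ᵥ y = 0
  rw [hM_eq, hγ, zero_smul, zero_mulVec]

theorem Module.Dual.exists_injOn_apply {K V ι : Type*} [Field K] [Infinite K] [AddCommGroup V]
    [Module K V] {μ : ι → Module.Dual K V} (s : Finset ι) (hμ : Set.InjOn μ s) :
    ∃ v, Set.InjOn (fun i => μ i v) s := by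
  by_contra! h
  simp only [Set.InjOn, not_forall] at h
  have hcover : ⋃ p : s.offDiag, (LinearMap.ker (μ p.1.1 - μ p.1.2) : Set V) = Set.univ := by
    refine Set.eq_univ_of_forall fun v => ?_
    obtain ⟨i, hi, j, hj, hv, hij⟩ := h v
    exact Set.mem_iUnion.mpr ⟨⟨(i, j), Finset.mem_offDiag.mpr ⟨hi, hj, hij⟩⟩,
      by simpa [sub_eq_zero] using hv⟩
  obtain ⟨⟨⟨i, j⟩, hij⟩, htop⟩ := Subspace.exists_eq_top_of_iUnion_eq_univ hcover
  obtain ⟨hi, hj, hne⟩ := Finset.mem_offDiag.mp hij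
  exact hne (hμ hi hj (sub_eq_zero.mp (LinearMap.ker_eq_top.mp htop)))

theorem Module.End.common_eigenvectors_linearIndependent {K V W ι : Type*} [Field K] [Infinite K]
    [AddCommGroup V] [Module K V] [AddCommGroup W] [Module K W] (f : W → Module.End K V)
    (μ : ι → Module.Dual K W) (hμ : Function.Injective μ) (v : ι → V)
    (h_eigenvec : ∀ i w, (f w).HasEigenvector (μ i w) (v i)) : LinearIndependent K v := by
  rw [linearIndependent_iff_finset_linearIndependent]
  intro s
  obtain ⟨w, hw⟩ := Module.Dual.exists_injOn_apply s hμ.injOn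
  exact (f w).eigenvectors_linearIndependent' (fun i : s => μ i w)
    (fun i j hij => Subtype.ext (hw i.2 j.2 hij)) _ fun i => h_eigenvec i w

theorem hess_hasEigenvector_of_rank_le_one {m : ℕ} {K : Type*} [Field K]
    {F : MvPolynomial (Fin m) K} (hF : F.IsHomogeneous 3) {y₀ : Fin m → K}
    (hdet : (hess F y₀).det ≠ 0) {v : Fin m → K} (hv : v ≠ 0) (hrank : (hess F v).rank ≤ 1) :
    ∃ γ : K, γ ≠ 0 ∧ ∀ y, Module.End.HasEigenvector (toLin' ((hess F y₀)⁻¹ * hess F y))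
      ((γ • hess F y₀ *ᵥ v) ⬝ᵥ y) v := by
  have hg : IsUnit (hess F y₀).det := isUnit_iff_ne_zero.mpr hdet
  have hb : hess F v *ᵥ y₀ ≠ 0 := by
    rw [hess_mulVec_comm hF]
    exact fun h => hv (mulVec_injective_iff_isUnit.mpr ((isUnit_iff_isUnit_det _).mpr hg)
      (h.trans (mulVec_zero _).symm))
  obtain ⟨γ, hγ0, hγ⟩ := (hess_isSymm F v).exists_eq_smul_vecMulVec_of_rank_le_one hrank hb
  refine ⟨γ, hγ0, fun y => ⟨Module.End.mem_eigenspace_iff.mpr ?_, hv⟩⟩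
  rw [toLin'_apply, ← mulVec_mulVec, hess_mulVec_comm hF y, hγ, smul_mulVec, vecMulVec_mulVec,
    hess_mulVec_comm hF v, op_smul_eq_smul, smul_smul, mulVec_smul, mulVec_mulVec,
    nonsing_inv_mul _ hg, one_mulVec, smul_dotProduct, smul_eq_mul]

/-- Proposition 3.3. For a non-degenerate cubic form
`F ∈ ℂ[x₀,…,xₙ]`, the set `W_F = {p ∈ ℙⁿ(ℂ) : rk 𝓗_F(p) ≤ 1}` is finite. -/
theorem stmt1 {n : ℕ} (F : MvPolynomial (Fin (n + 1)) ℂ)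
    (hF3 : F.IsHomogeneous 3) (hnd : nondeg F) :
    {p : Projectivization ℂ (Fin (n + 1) → ℂ) | (hess F p.rep).rank ≤ 1}.Finite := by
  set W := {p : Projectivization ℂ (Fin (n + 1) → ℂ) | (hess F p.rep).rank ≤ 1}
  obtain ⟨y₀, hdet⟩ := hnd
  set g := hess F y₀
  choose γ hγ0 hγ using fun p : W => hess_hasEigenvector_of_rank_le_one hF3 hdet
    p.1.rep_nonzero p.2
  have hμ : Function.Injective fun p : W =>
      dotProductEquiv ℂ (Fin (n + 1)) (γ p • g *ᵥ p.1.rep) := by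
    intro p q hpq
    have hg : Function.Injective g.mulVec := mulVec_injective_iff_isUnit.mpr
      ((isUnit_iff_isUnit_det _).mpr (isUnit_iff_ne_zero.mpr hdet))
    have hrep : γ p • p.1.rep = γ q • q.1.rep := by
      have h := (dotProductEquiv ℂ (Fin (n + 1))).injective hpq
      rw [← mulVec_smul, ← mulVec_smul] at h
      exact hg h
    refine Subtype.ext ?_
    rw [← p.1.mk_rep, ← q.1.mk_rep, Projectivization.mk_eq_mk_iff']
    exact ⟨(γ p)⁻¹ * γ q, by rw [mul_smul, ← hrep, inv_smul_smul₀ (hγ0 p)]⟩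
  exact Set.finite_coe_iff.mp
    (Module.End.common_eigenvectors_linearIndependent _ _ hμ _ hγ).finite
end
end

section
/- Let s ∈ {1,2} and let F, F₁ ∈ ℚ[x₀,…,xₙ] be non-degenerate cubic forms of the form F = a·x₀³ + b·x₀²x₁ + R(x₁,…,x_s) + H(x_{s+1},…,xₙ) and F₁ = a₁·x₀³ + b₁·x₀²x₁ + R₁(x₁,…,x_s) + H₁(x_{s+1},…,xₙ), where b ≠ 0, b₁ ≠ 0, R, R₁ ∈ ℚ[x₁,…,x_s] and H, H₁ ∈ ℚ[x_{s+1},…,xₙ] are cubic forms. Assume there exists T = (t_{hk})_{h,k=0,…,n} ∈ SL(n+1,ℚ) with T·F = F₁, t_{hk} = 0 for all h = s+1,…,n and k = 0,…,s, and det (t_{hk})_{h,k=0,…,s} = 1. Then there exists P ∈ SL(n−s,ℚ) such that P·H = H₁. -/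
open MvPolynomial

noncomputable section

section Stmt11Aux

lemma st11_eval_matAct {m : ℕ} (T : Matrix (Fin m) (Fin m) ℚ) (F : MvPolynomial (Fin m) ℚ)
    (x : Fin m → ℚ) : eval x (matAct T F) = eval (T.mulVec x) F := by
  show eval₂Hom (RingHom.id ℚ) x (bind₁ (fun i => ∑ j, C (T i j) * X j) F) = _
  rw [eval₂Hom_bind₁]
  have : (fun i => eval₂Hom (RingHom.id ℚ) x (∑ j, C (T i j) * X j)) = T.mulVec x := by
    funext i
    simp [Matrix.mulVec, dotProduct]
  rw [this]
  rfl

lemma st11_eval_congr_vars {m : ℕ} {p : MvPolynomial (Fin m) ℚ} {x y : Fin m → ℚ}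
    (h : ∀ i ∈ p.vars, x i = y i) : eval x p = eval y p :=
  eval₂Hom_congr' rfl (fun i hi _ => h i hi) rfl

lemma st11_eval_zero_on_vars {m : ℕ} {p : MvPolynomial (Fin m) ℚ} (hp : p.IsHomogeneous 3)
    {x : Fin m → ℚ} (h : ∀ i ∈ p.vars, x i = 0) : eval x p = 0 := by
  have h1 : eval x p = constantCoeff p := eval₂Hom_eq_constantCoeff_of_vars (RingHom.id ℚ) h
  rw [h1, constantCoeff_eq]
  exact hp.coeff_eq_zero (by simp)

lemma st11_eval_scale {m d : ℕ} {p : MvPolynomial (Fin m) ℚ} (hp : p.IsHomogeneous d)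
    (c : ℚ) (x : Fin m → ℚ) : eval (fun i => c * x i) p = c ^ d * eval x p := by
  conv_lhs => rw [p.as_sum]
  conv_rhs => rw [p.as_sum]
  rw [map_sum, map_sum, Finset.mul_sum]
  refine Finset.sum_congr rfl fun u hu => ?_
  have hd : u.degree = d := by
    rw [Finsupp.degree_eq_weight_one]
    exact hp (mem_support_iff.mp hu)
  rw [eval_monomial, eval_monomial, Finsupp.prod, Finsupp.prod]
  simp_rw [mul_pow]
  rw [Finset.prod_mul_distrib, Finset.prod_pow_eq_pow_sum]
  have : ∑ i ∈ u.support, u i = d := hd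
  rw [this]
  ring

end Stmt11Aux

/-- Lemma 3.20. Block-diagonalisation: if `T ∈ SL(n+1, ℚ)`
carries `F = a·x₀³ + b·x₀²x₁ + R(x₁,…,x_s) + H(x_{s+1},…,xₙ)` to
`F₁ = a₁·x₀³ + b₁·x₀²x₁ + R₁(x₁,…,x_s) + H₁(x_{s+1},…,xₙ)`, with the stated lower
block-triangular shape and upper-left block of determinant 1, then some
`P ∈ SL(n−s, ℚ)` (acting on the variables `x_{s+1},…,xₙ`) carries `H` to `H₁`. -/
theorem stmt11 {n s : ℕ} (hs : s = 1 ∨ s = 2) (hsn : s ≤ n)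
    (a b a₁ b₁ : ℚ) (hb : b ≠ 0) (hb₁ : b₁ ≠ 0)
    (Rf R₁ H H₁ : MvPolynomial (Fin (n + 1)) ℚ)
    (hRf3 : Rf.IsHomogeneous 3) (hR₁3 : R₁.IsHomogeneous 3)
    (hH3 : H.IsHomogeneous 3) (hH₁3 : H₁.IsHomogeneous 3)
    (hRfv : ∀ i ∈ Rf.vars, 1 ≤ i.val ∧ i.val ≤ s)
    (hR₁v : ∀ i ∈ R₁.vars, 1 ≤ i.val ∧ i.val ≤ s)
    (hHv : ∀ i ∈ H.vars, s + 1 ≤ i.val)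
    (hH₁v : ∀ i ∈ H₁.vars, s + 1 ≤ i.val)
    (F F₁ : MvPolynomial (Fin (n + 1)) ℚ)
    (hF : F = C a * X 0 ^ 3 + C b * X 0 ^ 2 * X 1 + Rf + H)
    (hF₁ : F₁ = C a₁ * X 0 ^ 3 + C b₁ * X 0 ^ 2 * X 1 + R₁ + H₁)
    (hndF : nondeg F) (hndF₁ : nondeg F₁)
    (T : Matrix (Fin (n + 1)) (Fin (n + 1)) ℚ) (hTdet : T.det = 1)
    (hTF : matAct T F = F₁)
    (hTblock : ∀ h k : Fin (n + 1), s + 1 ≤ h.val → k.val ≤ s → T h k = 0)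
    (hSdet : (Matrix.of fun i j : Fin (s + 1) =>
        T (Fin.castLE (by omega) i) (Fin.castLE (by omega) j)).det = 1) :
    ∃ P : Matrix (Fin (n + 1)) (Fin (n + 1)) ℚ, P.det = 1 ∧
      (∀ i j : Fin (n + 1), i.val ≤ s ∨ j.val ≤ s →
        P i j = (if i = j then 1 else 0)) ∧
      matAct P H = H₁ := by
  classical
  have hs1 : 1 ≤ s := by rcases hs with rfl | rfl <;> omega
  have hn1 : 1 ≤ n := le_trans hs1 hsn
  -- the index equivalence
  have hsn1 : s + 1 + (n - s) = n + 1 := by omega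
  let e : Fin (s + 1) ⊕ Fin (n - s) ≃ Fin (n + 1) := finSumFinEquiv.trans (finCongr hsn1)
  have he1 : ∀ i : Fin (s + 1), (e (Sum.inl i)).val = i.val := fun i => by
    simp [e]
  have he2 : ∀ j : Fin (n - s), (e (Sum.inr j)).val = s + 1 + j.val := fun j => by
    simp [e]
  -- the blocks of T
  set S' : Matrix (Fin (s + 1)) (Fin (s + 1)) ℚ :=
    Matrix.of (fun i j => T (e (Sum.inl i)) (e (Sum.inl j))) with hS'
  set Q' : Matrix (Fin (n - s)) (Fin (n - s)) ℚ :=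
    Matrix.of (fun i j => T (e (Sum.inr i)) (e (Sum.inr j))) with hQ'
  have hS'det : S'.det = 1 := by
    have : S' = Matrix.of (fun i j : Fin (s + 1) =>
        T (Fin.castLE (by omega) i) (Fin.castLE (by omega) j)) := by
      ext i j
      show T (e (Sum.inl i)) (e (Sum.inl j)) = T (Fin.castLE (by omega) i) (Fin.castLE (by omega) j)
      congr 1 <;> exact Fin.ext (by simp [he1])
    rw [this]
    exact hSdet
  have hTsub : T.submatrix e e = Matrix.fromBlocks S'
      (Matrix.of (fun i j => T (e (Sum.inl i)) (e (Sum.inr j)))) 0 Q' := by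
    ext i j
    cases i with
    | inl i =>
      cases j with
      | inl j => rfl
      | inr j => rfl
    | inr i =>
      cases j with
      | inl j =>
        show T (e (Sum.inr i)) (e (Sum.inl j)) = 0
        exact hTblock _ _ (by rw [he2]; omega) (by rw [he1]; omega)
      | inr j => rfl
  have hQ'det : Q'.det = 1 := by
    have h1 : T.det = S'.det * Q'.det := by
      rw [← Matrix.det_submatrix_equiv_self e, hTsub, Matrix.det_fromBlocks_zero₂₁]
    rw [hTdet, hS'det, one_mul] at h1
    exact h1.symm
  -- the candidate matrix P
  set P : Matrix (Fin (n + 1)) (Fin (n + 1)) ℚ :=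
    Matrix.of (fun i j => if i.val ≤ s ∨ j.val ≤ s then (if i = j then 1 else 0) else T i j)
    with hPdef
  have hPapp : ∀ i j : Fin (n + 1),
      P i j = if i.val ≤ s ∨ j.val ≤ s then (if i = j then 1 else 0) else T i j := fun i j => rfl
  have hPsub : P.submatrix e e = Matrix.fromBlocks 1 0 0 Q' := by
    ext i j
    cases i with
    | inl i =>
      cases j with
      | inl j =>
        show P (e (Sum.inl i)) (e (Sum.inl j)) = (1 : Matrix (Fin (s+1)) (Fin (s+1)) ℚ) i j
        rw [hPapp, if_pos (Or.inl (by rw [he1]; omega)), Matrix.one_apply]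
        by_cases h : i = j
        · rw [if_pos (by rw [h]), if_pos h]
        · rw [if_neg (fun hc => h (by simpa using e.injective hc)), if_neg h]
      | inr j =>
        show P (e (Sum.inl i)) (e (Sum.inr j)) = 0
        rw [hPapp, if_pos (Or.inl (by rw [he1]; omega)),
          if_neg (fun hc => by simpa using e.injective hc)]
    | inr i =>
      cases j with
      | inl j =>
        show P (e (Sum.inr i)) (e (Sum.inl j)) = 0
        rw [hPapp, if_pos (Or.inr (by rw [he1]; omega)),
          if_neg (fun hc => by simpa using e.injective hc)]
      | inr j =>
        show P (e (Sum.inr i)) (e (Sum.inr j)) = Q' i j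
        rw [hPapp, if_neg]
        · rfl
        · push_neg
          constructor <;> [rw [he2]; rw [he2]] <;> omega
  have hPdet : P.det = 1 := by
    rw [← Matrix.det_submatrix_equiv_self e, hPsub, Matrix.det_fromBlocks_zero₂₁,
      Matrix.det_one, one_mul, hQ'det]
  -- scalar versions of the low parts
  set llf : (Fin (n + 1) → ℚ) → ℚ :=
    (fun v => a * v 0 ^ 3 + b * v 0 ^ 2 * v 1 + eval v Rf) with hllf
  set ll1 : (Fin (n + 1) → ℚ) → ℚ :=
    (fun v => a₁ * v 0 ^ 3 + b₁ * v 0 ^ 2 * v 1 + eval v R₁) with hll1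
  have hv0 : (0 : Fin (n + 1)).val ≤ s := by simp
  have hv1 : (1 : Fin (n + 1)).val ≤ s := by
    rw [Fin.val_one', Nat.mod_eq_of_lt (by omega)]
    exact hs1
  have hevF : ∀ v, eval v F = llf v + eval v H := by
    intro v
    rw [hF, hllf]
    simp only [map_add, map_mul, map_pow, eval_C, eval_X]
  have hevF₁ : ∀ v, eval v F₁ = ll1 v + eval v H₁ := by
    intro v
    rw [hF₁, hll1]
    simp only [map_add, map_mul, map_pow, eval_C, eval_X]
  have hid : ∀ v, eval (T.mulVec v) F = eval v F₁ := by
    intro v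
    rw [← st11_eval_matAct, hTF]
  -- congruence and vanishing lemmas
  have hll_congr : ∀ v v' : Fin (n + 1) → ℚ,
      (∀ i : Fin (n + 1), i.val ≤ s → v i = v' i) → llf v = llf v' := by
    intro v v' h
    have h0 := h 0 hv0
    have h1 := h 1 hv1
    have hR : eval v Rf = eval v' Rf :=
      st11_eval_congr_vars (fun i hi => h i (hRfv i hi).2)
    rw [hllf]
    simp only [h0, h1, hR]
  have hll1_congr : ∀ v v' : Fin (n + 1) → ℚ,
      (∀ i : Fin (n + 1), i.val ≤ s → v i = v' i) → ll1 v = ll1 v' := by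
    intro v v' h
    have h0 := h 0 hv0
    have h1 := h 1 hv1
    have hR : eval v R₁ = eval v' R₁ :=
      st11_eval_congr_vars (fun i hi => h i (hR₁v i hi).2)
    rw [hll1]
    simp only [h0, h1, hR]
  have hll_zero : ∀ v : Fin (n + 1) → ℚ,
      (∀ i : Fin (n + 1), i.val ≤ s → v i = 0) → llf v = 0 := by
    intro v h
    have hR : eval v Rf = 0 :=
      st11_eval_zero_on_vars hRf3 (fun i hi => h i (hRfv i hi).2)
    rw [hllf]
    simp only [h 0 hv0, h 1 hv1, hR]
    ring
  have hll1_zero : ∀ v : Fin (n + 1) → ℚ,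
      (∀ i : Fin (n + 1), i.val ≤ s → v i = 0) → ll1 v = 0 := by
    intro v h
    have hR : eval v R₁ = 0 :=
      st11_eval_zero_on_vars hR₁3 (fun i hi => h i (hR₁v i hi).2)
    rw [hll1]
    simp only [h 0 hv0, h 1 hv1, hR]
    ring
  have hll_scale : ∀ v : Fin (n + 1) → ℚ, llf (fun i => 2 * v i) = 8 * llf v := by
    intro v
    have hR := st11_eval_scale hRf3 2 v
    rw [hllf]
    simp only [hR]
    ring
  have hH_congr : ∀ v v' : Fin (n + 1) → ℚ,
      (∀ i : Fin (n + 1), s + 1 ≤ i.val → v i = v' i) → eval v H = eval v' H :=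
    fun v v' h => st11_eval_congr_vars (fun i hi => h i (hHv i hi))
  have hH₁_congr : ∀ v v' : Fin (n + 1) → ℚ,
      (∀ i : Fin (n + 1), s + 1 ≤ i.val → v i = v' i) → eval v H₁ = eval v' H₁ :=
    fun v v' h => st11_eval_congr_vars (fun i hi => h i (hH₁v i hi))
  have hH_zero : ∀ v : Fin (n + 1) → ℚ,
      (∀ i : Fin (n + 1), s + 1 ≤ i.val → v i = 0) → eval v H = 0 :=
    fun v h => st11_eval_zero_on_vars hH3 (fun i hi => h i (hHv i hi))
  have hH₁_zero : ∀ v : Fin (n + 1) → ℚ,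
      (∀ i : Fin (n + 1), s + 1 ≤ i.val → v i = 0) → eval v H₁ = 0 :=
    fun v h => st11_eval_zero_on_vars hH₁3 (fun i hi => h i (hH₁v i hi))
  -- surjectivity of T on the low-supported subspace
  have hS'unit : IsUnit S'.det := by rw [hS'det]; exact isUnit_one
  have key_surj : ∀ w : Fin (n + 1) → ℚ, (∀ i : Fin (n + 1), ¬ i.val ≤ s → w i = 0) →
      ∃ y : Fin (n + 1) → ℚ, (∀ i : Fin (n + 1), ¬ i.val ≤ s → y i = 0) ∧ T.mulVec y = w := by
    intro w hw
    set y' : Fin (s + 1) → ℚ := S'⁻¹.mulVec (fun i => w (e (Sum.inl i))) with hy'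
    refine ⟨fun k => Sum.elim y' (fun _ => (0:ℚ)) (e.symm k), ?_, ?_⟩
    · intro i hi
      rcases hsplit : e.symm i with i' | j'
      · exfalso
        have : e (Sum.inl i') = i := by rw [← hsplit, Equiv.apply_symm_apply]
        apply hi
        rw [← this, he1]
        omega
      · simp [hsplit]
    · funext k
      obtain ⟨c, rfl⟩ : ∃ c, e c = k := ⟨e.symm k, by simp⟩
      have hsum : T.mulVec (fun k => Sum.elim y' (fun _ => (0:ℚ)) (e.symm k)) (e c)
          = ∑ d : Fin (s + 1) ⊕ Fin (n - s), T (e c) (e d) * Sum.elim y' (fun _ => (0:ℚ)) d := by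
        show (∑ j, T (e c) j * Sum.elim y' (fun _ => (0:ℚ)) (e.symm j)) = _
        rw [← Equiv.sum_comp e (fun j => T (e c) j * Sum.elim y' (fun _ => (0:ℚ)) (e.symm j))]
        exact Finset.sum_congr rfl fun d _ => by rw [Equiv.symm_apply_apply]
      rw [hsum, Fintype.sum_sum_type]
      cases c with
      | inl i =>
        have h2 : ∑ j' : Fin (n - s), T (e (Sum.inl i)) (e (Sum.inr j')) * Sum.elim y' (fun _ => (0:ℚ)) (Sum.inr j' : Fin (s+1) ⊕ Fin (n-s)) = 0 := by
          apply Finset.sum_eq_zero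
          intro j' _
          simp
        rw [h2, add_zero]
        have h1 : ∑ i' : Fin (s + 1), T (e (Sum.inl i)) (e (Sum.inl i')) * Sum.elim y' (fun _ => (0:ℚ)) (Sum.inl i' : Fin (s+1) ⊕ Fin (n-s))
            = (S'.mulVec y') i := by
          exact Finset.sum_congr rfl fun i' _ => rfl
        rw [h1, hy', Matrix.mulVec_mulVec, Matrix.mul_nonsing_inv _ hS'unit, Matrix.one_mulVec]
      | inr j =>
        have h1 : ∑ i' : Fin (s + 1), T (e (Sum.inr j)) (e (Sum.inl i')) * Sum.elim y' (fun _ => (0:ℚ)) (Sum.inl i' : Fin (s+1) ⊕ Fin (n-s)) = 0 := by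
          apply Finset.sum_eq_zero
          intro i' _
          rw [hTblock _ _ (by rw [he2]; omega) (by rw [he1]; omega), zero_mul]
        have h2 : ∑ j' : Fin (n - s), T (e (Sum.inr j)) (e (Sum.inr j')) * Sum.elim y' (fun _ => (0:ℚ)) (Sum.inr j' : Fin (s+1) ⊕ Fin (n-s)) = 0 := by
          apply Finset.sum_eq_zero
          intro j' _
          simp
        rw [h1, h2, add_zero]
        exact (hw _ (by rw [he2]; omega)).symm
  -- the main pointwise computation
  have main : ∀ x : Fin (n + 1) → ℚ, eval (P.mulVec x) H = eval x H₁ := by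
    intro x
    set hx : Fin (n + 1) → ℚ := (fun i => if i.val ≤ s then 0 else x i) with hhx
    set u : Fin (n + 1) → ℚ := T.mulVec hx with hu
    set lam : Fin (n + 1) → ℚ := (fun i => if i.val ≤ s then u i else 0) with hlam
    -- E1
    have E1 : llf lam + eval u H = eval x H₁ := by
      have h := hid hx
      rw [hevF, hevF₁] at h
      have hl : llf u = llf lam := hll_congr _ _ (fun i hi => by rw [hlam]; simp only [if_pos hi])
      have hz : ll1 hx = 0 := hll1_zero _ (fun i hi => by rw [hhx]; simp only [if_pos hi])
      have hc : eval hx H₁ = eval x H₁ :=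
        hH₁_congr _ _ (fun i hi => by rw [hhx]; simp only [if_neg (by omega : ¬ i.val ≤ s)])
      rw [hl, hz, hc, zero_add] at h
      exact h
    obtain ⟨y, hy0, hyT⟩ := key_surj lam
      (fun i hi => by rw [hlam]; simp only [if_neg hi])
    -- E2
    have E2 : llf lam = ll1 y := by
      have h := hid y
      rw [hyT, hevF, hevF₁] at h
      have hz1 : eval lam H = 0 :=
        hH_zero _ (fun i hi => by rw [hlam]; simp only [if_neg (by omega : ¬ i.val ≤ s)])
      have hz2 : eval y H₁ = 0 := hH₁_zero _ (fun i hi => hy0 i (by omega))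
      rw [hz1, hz2, add_zero, add_zero] at h
      exact h
    -- E3
    have E3 : 8 * llf lam + eval u H = ll1 y + eval x H₁ := by
      have h := hid (y + hx)
      rw [Matrix.mulVec_add, hyT, hevF, hevF₁] at h
      have hlow : ∀ i : Fin (n + 1), i.val ≤ s → (lam + u) i = 2 * lam i := by
        intro i hi
        have : lam i = u i := by rw [hlam]; simp only [if_pos hi]
        show lam i + u i = 2 * lam i
        rw [this]; ring
      have hl : llf (lam + u) = 8 * llf lam := by
        rw [hll_congr (lam + u) (fun i => 2 * lam i) hlow, hll_scale]
      have hh : eval (lam + u) H = eval u H := by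
        apply hH_congr
        intro i hi
        show lam i + u i = u i
        rw [hlam]
        simp only [if_neg (by omega : ¬ i.val ≤ s), zero_add]
      have hl1 : ll1 (y + hx) = ll1 y := by
        apply hll1_congr
        intro i hi
        show y i + hx i = y i
        rw [hhx]
        simp only [if_pos hi, add_zero]
      have hh1 : eval (y + hx) H₁ = eval x H₁ := by
        apply hH₁_congr
        intro i hi
        show y i + hx i = x i
        rw [hhx, hy0 i (by omega)]
        simp only [if_neg (by omega : ¬ i.val ≤ s), zero_add]
      rw [hl, hh, hl1, hh1] at h
      exact h
    have hlam0 : llf lam = 0 := by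
      rw [E2] at E3 ⊢
      linarith [E1, E3, E2]
    have hPu : eval (P.mulVec x) H = eval u H := by
      apply hH_congr
      intro i hi
      show (∑ j, P i j * x j) = ∑ j, T i j * hx j
      refine Finset.sum_congr rfl fun j _ => ?_
      by_cases hj : j.val ≤ s
      · have hij : i ≠ j := by intro hc; rw [hc] at hi; omega
        rw [hPapp, if_pos (Or.inr hj), if_neg hij, hhx]
        simp only [if_pos hj, zero_mul, mul_zero]
      · rw [hPapp, if_neg (by push_neg; exact ⟨by omega, by omega⟩), hhx]
        simp only [if_neg hj]
    rw [hPu]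
    have : eval u H = eval x H₁ := by
      rw [← E1, hlam0, zero_add]
    exact this
  exact ⟨P, hPdet, fun i j hij => by rw [hPapp, if_pos hij],
    MvPolynomial.funext fun x => by rw [st11_eval_matAct]; exact main x⟩
end
end

section
/- Let F ∈ ℤ[x₀,…,xₙ] be a non-degenerate cubic form such that the projective hypersurface {F = 0} ⊆ ℙⁿ(ℂ) is smooth (the only common zero in ℂ^{n+1} of ∂₀F,…,∂ₙF is the origin), and fix a nonzero integer r. Then there exist finitely many pairs (a₁,G₁),…,(a_k,G_k) ∈ ℤ × ℤ[x₁,…,xₙ]₃ such that for every integer (n+1)×(n+1) matrix T with det T = r for which T·F = a·x₀³ + G(x₁,…,xₙ) for some a ∈ ℤ and some non-degenerate cubic form G ∈ ℤ[x₁,…,xₙ], there exist i ∈ {1,…,k} and M ∈ SL(n,ℤ) with a = a_i and G = M·G_i. Moreover, for each i the projective hypersurface {G_i = 0} ⊆ ℙ^{n−1}(ℂ) is smooth. -/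
open MvPolynomial

noncomputable section

/-!
Reduce `T` modulo `2r`. If `T₀` and `T` have the same residue and both put `F` in the form
`a x₀³ + G(x₁, …, xₙ)`, then `γ = T₀⁻¹ T` is an integral matrix of determinant `1` with `γ₀₀` odd,
and it carries `a₀ x₀³ + G₀` to `a x₀³ + G`. Hessians transform by `γᵀ (·) γ`. At the point
`e₀` the Hessian of `a₀ x₀³ + G₀` is `6 a₀ E₀₀`, and `a₀ ≠ 0` by smoothness, so `γ₀₀ ≠ 0` forces
the first row of `γ` to be `(γ₀₀, 0, …, 0)`; at points with `x₀ = 0` the non-degeneracy of `G₀`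
forces the rest of the first column to vanish. Thus `γ = diag(±1, M)`, so `a = ±a₀` and
`G = M · G₀`, the sign being absorbed by a fixed matrix of determinant `-1`. One splitting per
residue class, together with its sign-flipped companion, is the finite list. Smoothness of every
`Gᵢ` is inherited from `F`, since `T` is invertible over `ℂ`.
-/

open scoped Matrix

namespace MvPolynomial

variable {σ τ R : Type*} [CommSemiring R]

theorem pderiv_bind₁ [Fintype σ] (f : σ → MvPolynomial τ R) (P : MvPolynomial σ R) (i : τ) :
    pderiv i (bind₁ f P) = ∑ k, pderiv i (f k) * bind₁ f (pderiv k P) := by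
  classical
  induction P using MvPolynomial.induction_on with
  | C a => simp
  | add p q hp hq => simp only [map_add, hp, hq, mul_add, Finset.sum_add_distrib]
  | mul_X p j hp =>
    simp only [map_mul, map_add, bind₁_X_right, pderiv_mul, hp, pderiv_X, Pi.single_apply,
      apply_ite (bind₁ f), map_zero, mul_add, mul_one, Finset.sum_add_distrib,
      Finset.sum_mul, mul_ite, mul_zero, Finset.sum_ite_eq, Finset.mem_univ, if_true]
    rw [mul_comm (bind₁ f p)]
    simp only [mul_assoc, add_comm]

theorem IsHomogeneous.eval_zero {P : MvPolynomial σ R} {d : ℕ} (h : P.IsHomogeneous d)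
    (hd : d ≠ 0) : eval 0 P = 0 := by
  rw [MvPolynomial.eval_zero, constantCoeff_eq]
  exact h.coeff_eq_zero (by simpa using hd.symm)

end MvPolynomial

section MatAct

variable {m : ℕ} {R : Type*} [CommSemiring R]

theorem matAct_matAct (T S : Matrix (Fin m) (Fin m) R) (P : MvPolynomial (Fin m) R) :
    matAct S (matAct T P) = matAct (T * S) P := by
  simp only [matAct, bind₁_bind₁, map_sum, map_mul, bind₁_C_right, bind₁_X_right,
    Matrix.mul_apply, Finset.mul_sum, Finset.sum_mul, mul_assoc]
  exact congrArg (bind₁ · P) (funext fun i => Finset.sum_comm)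

theorem map_matAct {S : Type*} [CommSemiring S] (f : R →+* S) (T : Matrix (Fin m) (Fin m) R)
    (P : MvPolynomial (Fin m) R) : map f (matAct T P) = matAct (T.map f) (map f P) := by
  simp [matAct, map_bind₁]

theorem MvPolynomial.IsHomogeneous.matAct {P : MvPolynomial (Fin m) R} {d : ℕ}
    (h : P.IsHomogeneous d) (T : Matrix (Fin m) (Fin m) R) :
    (_root_.matAct T P).IsHomogeneous d := by
  have := h.aeval (n := 1) (fun i => ∑ j, C (T i j) * X j)
    fun i => IsHomogeneous.sum Finset.univ _ 1 fun j _ => isHomogeneous_C_mul_X (T i j) j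
  rwa [one_mul] at this

theorem eval_matAct (T : Matrix (Fin m) (Fin m) R) (P : MvPolynomial (Fin m) R)
    (x : Fin m → R) : eval x (matAct T P) = eval (T *ᵥ x) P := by
  rw [matAct, hom_bind₁]
  exact congr_arg₂ (eval₂Hom · · P) (by ext; simp)
    (funext fun i => by simp [Matrix.mulVec, dotProduct])

theorem pderiv_matAct (T : Matrix (Fin m) (Fin m) R) (P : MvPolynomial (Fin m) R) (i : Fin m) :
    pderiv i (matAct T P) = ∑ k, C (T k i) * matAct T (pderiv k P) := by
  classical
  simp [matAct, pderiv_bind₁, pderiv_X, Pi.single_apply]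

theorem hess_matAct (T : Matrix (Fin m) (Fin m) R) (P : MvPolynomial (Fin m) R)
    (x : Fin m → R) : hess (matAct T P) x = Tᵀ * hess P (T *ᵥ x) * T := by
  ext i j
  simp only [hess, pderiv_matAct, map_sum, pderiv_C_mul, Finset.mul_sum, eval_mul, eval_C,
    eval_matAct, Matrix.mul_apply, Matrix.transpose_apply, Matrix.of_apply, Finset.sum_mul]
  exact Finset.sum_congr rfl fun k _ => Finset.sum_congr rfl fun l _ => by ring

end MatAct

theorem transpose_mul_hess_mul_of_matAct_eq {m : ℕ} {R : Type*} [CommRing R]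
    {γ : Matrix (Fin m) (Fin m) R} (hγ : IsUnit γ.det) {P Q : MvPolynomial (Fin m) R}
    (h : matAct γ P = Q) (y : Fin m → R) : γᵀ * hess P y * γ = hess Q (γ⁻¹ *ᵥ y) := by
  rw [← h, hess_matAct, Matrix.mulVec_mulVec, Matrix.mul_nonsing_inv _ hγ, Matrix.one_mulVec]

theorem hess_zero_of_isHomogeneous {m d : ℕ} {R : Type*} [CommSemiring R]
    {G : MvPolynomial (Fin m) R} (hG : G.IsHomogeneous d) (hd : 3 ≤ d) : hess G 0 = 0 := by
  ext i j
  exact (hG.pderiv.pderiv).eval_zero (by omega)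

section SplitCubic

variable {n : ℕ} {R : Type*}

def splitCubic [CommSemiring R] (a : R) (G : MvPolynomial (Fin n) R) :
    MvPolynomial (Fin (n + 1)) R :=
  C a * X 0 ^ 3 + rename Fin.succ G

variable [CommSemiring R] (a : R) (G : MvPolynomial (Fin n) R)

theorem pderiv_zero_rename_succ : pderiv 0 (rename Fin.succ G) = 0 := by
  refine pderiv_eq_zero_of_notMem_vars fun h => ?_
  obtain ⟨i, -, hi⟩ := Finset.mem_image.mp (vars_rename _ _ h)
  exact Fin.succ_ne_zero i hi

theorem pderiv_zero_splitCubic : pderiv 0 (splitCubic a G) = C (3 * a) * X 0 ^ 2 := by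
  simp [splitCubic, pderiv_zero_rename_succ, C_mul, map_ofNat]
  ring

theorem pderiv_succ_splitCubic (i : Fin n) :
    pderiv i.succ (splitCubic a G) = rename Fin.succ (pderiv i G) := by
  simp [splitCubic, pderiv_rename (Fin.succ_injective n),
    pderiv_X_of_ne (Fin.succ_ne_zero i).symm]

theorem hess_splitCubic_zero_zero (x : Fin (n + 1) → R) :
    hess (splitCubic a G) x 0 0 = 6 * a * x 0 := by
  simp [hess, pderiv_zero_splitCubic]
  ring

theorem hess_splitCubic_zero_succ (x : Fin (n + 1) → R) (j : Fin n) :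
    hess (splitCubic a G) x 0 j.succ = 0 := by
  simp [hess, pderiv_succ_splitCubic, pderiv_zero_rename_succ]

theorem hess_splitCubic_succ_zero (x : Fin (n + 1) → R) (i : Fin n) :
    hess (splitCubic a G) x i.succ 0 = 0 := by
  simp [hess, pderiv_zero_splitCubic, pderiv_X_of_ne (Fin.succ_ne_zero i).symm]

theorem hess_splitCubic_succ_succ (x : Fin (n + 1) → R) (i j : Fin n) :
    hess (splitCubic a G) x i.succ j.succ = hess G (x ∘ Fin.succ) i j := by
  simp [hess, pderiv_succ_splitCubic, pderiv_rename (Fin.succ_injective n), eval_rename]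

theorem map_splitCubic {S : Type*} [CommSemiring S] (f : R →+* S) :
    map f (splitCubic a G) = splitCubic (f a) (map f G) := by
  simp [splitCubic, map_rename]

theorem coeff_splitCubic : coeff (Finsupp.single 0 3) (splitCubic a G) = a := by
  rw [splitCubic, coeff_add, C_mul_X_pow_eq_monomial, coeff_monomial, if_pos rfl,
    coeff_rename_eq_zero, add_zero]
  intro u hu
  have h0 := DFunLike.congr_fun hu 0
  rw [Finsupp.mapDomain_of_notMem_range _ _ fun ⟨i, hi⟩ => Fin.succ_ne_zero i hi] at h0
  simp at h0

end SplitCubic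

theorem splitCubic_inj {n : ℕ} {R : Type*} [CommRing R] {a b : R}
    {G H : MvPolynomial (Fin n) R} : splitCubic a G = splitCubic b H ↔ a = b ∧ G = H := by
  refine ⟨fun h => ?_, fun ⟨ha, hG⟩ => ha ▸ hG ▸ rfl⟩
  have hab : a = b := by
    simpa only [coeff_splitCubic] using congrArg (coeff (Finsupp.single 0 3)) h
  subst hab
  exact ⟨rfl, rename_injective _ (Fin.succ_injective n) (add_left_cancel h)⟩

theorem smoothHyp_matAct {m : ℕ} {T : Matrix (Fin m) (Fin m) ℂ} (hT : T.det ≠ 0)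
    {P : MvPolynomial (Fin m) ℂ} (h : smoothHyp P) : smoothHyp (matAct T P) := by
  intro x hx
  have hgrad : (fun k => eval (T *ᵥ x) (pderiv k P)) ᵥ* T = 0 := by
    ext i
    simpa [pderiv_matAct, eval_matAct, Matrix.vecMul, dotProduct, mul_comm] using hx i
  refine Matrix.eq_zero_of_mulVec_eq_zero hT (h _ fun k => ?_)
  exact congrFun (Matrix.eq_zero_of_vecMul_eq_zero hT hgrad) k

theorem smoothHyp_of_smoothHyp_splitCubic {n : ℕ} {a : ℂ} {G : MvPolynomial (Fin n) ℂ}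
    (hG : G.IsHomogeneous 3) (h : smoothHyp (splitCubic a G)) : a ≠ 0 ∧ smoothHyp G := by
  constructor
  · rintro rfl
    have hsucc : (Pi.single 0 1 : Fin (n + 1) → ℂ) ∘ Fin.succ = 0 :=
      funext fun j => Pi.single_eq_of_ne (Fin.succ_ne_zero j) 1
    have hcrit := h (Pi.single 0 1) fun i => Fin.cases (by simp [pderiv_zero_splitCubic])
      (fun i => by
        rw [pderiv_succ_splitCubic, eval_rename, hsucc]
        exact hG.pderiv.eval_zero (by norm_num)) i
    simpa using congrFun hcrit 0
  · intro x hx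
    have hcrit := h (Fin.cons 0 x) fun i => Fin.cases (by simp [pderiv_zero_splitCubic])
      (fun i => by simpa [pderiv_succ_splitCubic, eval_rename] using hx i) i
    funext j
    simpa using congrFun hcrit j.succ

theorem det_eq_mul_det_submatrix_of_row_zero {n : ℕ} {R : Type*} [CommRing R]
    {A : Matrix (Fin (n + 1)) (Fin (n + 1)) R} (h : ∀ j : Fin n, A 0 j.succ = 0) :
    A.det = A 0 0 * (A.submatrix Fin.succ Fin.succ).det := by
  simp [Matrix.det_succ_row_zero, Fin.sum_univ_succ, h]

theorem matAct_splitCubic_of_block {n : ℕ} {R : Type*} [CommSemiring R]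
    {γ : Matrix (Fin (n + 1)) (Fin (n + 1)) R} (hrow : ∀ j : Fin n, γ 0 j.succ = 0)
    (hcol : ∀ i : Fin n, γ i.succ 0 = 0) (a : R) (G : MvPolynomial (Fin n) R) :
    matAct γ (splitCubic a G) =
      splitCubic (γ 0 0 ^ 3 * a) (matAct (γ.submatrix Fin.succ Fin.succ) G) := by
  have h0 : ∑ j, C (γ 0 j) * X j = C (γ 0 0) * (X 0 : MvPolynomial (Fin (n + 1)) R) := by
    simp [Fin.sum_univ_succ, hrow]
  have hs : ∀ i : Fin n, ∑ j, C (γ i.succ j) * X j =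
      rename Fin.succ (∑ j, C (γ i.succ j.succ) * (X j : MvPolynomial (Fin n) R)) := by
    simp [Fin.sum_univ_succ, hcol]
  simp only [matAct, splitCubic, map_add, map_mul, map_pow, bind₁_C_right, bind₁_X_right,
    bind₁_rename, rename_bind₁, Function.comp_def, h0, hs, Matrix.submatrix_apply]
  ring

section Rigidity

variable {n : ℕ} {R : Type*} [CommRing R] [IsDomain R]
  {γ : Matrix (Fin (n + 1)) (Fin (n + 1)) R} {a a' : R} {G G' : MvPolynomial (Fin n) R}

theorem row_zero_eq_zero_of_matAct_splitCubic [CharZero R] (hγ : IsUnit γ.det)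
    (h : matAct γ (splitCubic a G) = splitCubic a' G') (hG : G.IsHomogeneous 3) (ha : a ≠ 0)
    (h00 : γ 0 0 ≠ 0) (j : Fin n) : γ 0 j.succ = 0 := by
  have hsucc : (Pi.single 0 1 : Fin (n + 1) → R) ∘ Fin.succ = 0 :=
    funext fun j => Pi.single_eq_of_ne (Fin.succ_ne_zero j) 1
  have hH : hess (splitCubic a G) (Pi.single 0 1) = Matrix.single 0 0 (6 * a) := by
    ext i k
    cases i using Fin.cases <;> cases k using Fin.cases <;>
      simp [hess_splitCubic_zero_zero, hess_splitCubic_zero_succ, hess_splitCubic_succ_zero,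
        hess_splitCubic_succ_succ, hsucc, hess_zero_of_isHomogeneous hG le_rfl,
        (Fin.succ_ne_zero _).symm]
  have hentry := congrFun (congrFun
    (transpose_mul_hess_mul_of_matAct_eq hγ h (Pi.single 0 1)) 0) j.succ
  rw [hH, hess_splitCubic_zero_succ] at hentry
  simpa [Matrix.mul_apply, Matrix.single_apply, ite_and, ha, h00] using hentry

theorem col_zero_eq_zero_of_matAct_splitCubic (hγ : IsUnit γ.det)
    (h : matAct γ (splitCubic a G) = splitCubic a' G') (hnd : nondeg G)
    (hrow : ∀ j : Fin n, γ 0 j.succ = 0) (i : Fin n) : γ i.succ 0 = 0 := by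
  have hM : (γ.submatrix Fin.succ Fin.succ).det ≠ 0 := by
    intro h0
    apply hγ.ne_zero
    rw [det_eq_mul_det_submatrix_of_row_zero hrow, h0, mul_zero]
  have hker : ∀ y,
      ((fun k => γ k.succ 0) ᵥ* hess G y) ᵥ* γ.submatrix Fin.succ Fin.succ = 0 := by
    intro y
    ext t
    have hentry := congrFun (congrFun
      (transpose_mul_hess_mul_of_matAct_eq hγ h (Fin.cons 0 y)) 0) t.succ
    rw [hess_splitCubic_zero_succ] at hentry
    simpa [Matrix.mul_apply, Fin.sum_univ_succ, hess_splitCubic_zero_zero,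
      hess_splitCubic_zero_succ, hess_splitCubic_succ_zero, hess_splitCubic_succ_succ,
      Matrix.vecMul, dotProduct] using hentry
  obtain ⟨y, hy⟩ := hnd
  exact congrFun (Matrix.eq_zero_of_vecMul_eq_zero hy
    (Matrix.eq_zero_of_vecMul_eq_zero hM (hker y))) i

theorem eq_matAct_submatrix_of_matAct_splitCubic [CharZero R] (hγ : IsUnit γ.det)
    (h : matAct γ (splitCubic a G) = splitCubic a' G') (hG : G.IsHomogeneous 3)
    (hnd : nondeg G) (ha : a ≠ 0) (h00 : γ 0 0 ≠ 0) :
    γ.det = γ 0 0 * (γ.submatrix Fin.succ Fin.succ).det ∧ a' = γ 0 0 ^ 3 * a ∧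
      G' = matAct (γ.submatrix Fin.succ Fin.succ) G := by
  have hrow := row_zero_eq_zero_of_matAct_splitCubic hγ h hG ha h00
  have hcol := col_zero_eq_zero_of_matAct_splitCubic hγ h hnd hrow
  rw [matAct_splitCubic_of_block hrow hcol, splitCubic_inj] at h
  exact ⟨det_eq_mul_det_submatrix_of_row_zero hrow, h.1.symm, h.2.symm⟩

end Rigidity

def signFlip (n : ℕ) : Matrix (Fin n) (Fin n) ℤ :=
  Matrix.diagonal fun j => if (j : ℕ) = 0 then -1 else 1

theorem signFlip_mul_self (n : ℕ) : signFlip n * signFlip n = 1 := by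
  rw [signFlip, Matrix.diagonal_mul_diagonal, ← Matrix.diagonal_one]
  congr 1
  ext j
  split_ifs <;> rfl

theorem det_signFlip {n : ℕ} (hn : n ≠ 0) : (signFlip n).det = -1 := by
  obtain ⟨k, rfl⟩ := Nat.exists_eq_succ_of_ne_zero hn
  simp [signFlip, Matrix.det_diagonal]

theorem det_signFlip_ne_zero (n : ℕ) : (signFlip n).det ≠ 0 := by
  intro h
  simpa [h] using congrArg Matrix.det (signFlip_mul_self n)

def signPair {n : ℕ} (a : ℤ) (G : MvPolynomial (Fin n) ℤ) : Set (ℤ × MvPolynomial (Fin n) ℤ) :=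
  {(a, G), (-a, matAct (signFlip n) G)}

theorem exists_mem_signPair_of_matAct_splitCubic {n : ℕ}
    {γ : Matrix (Fin (n + 1)) (Fin (n + 1)) ℤ} {a a' : ℤ} {G G' : MvPolynomial (Fin n) ℤ}
    (hγ : γ.det = 1) (h : matAct γ (splitCubic a G) = splitCubic a' G')
    (hG : G.IsHomogeneous 3) (hnd : nondeg G) (ha : a ≠ 0) (h00 : γ 0 0 ≠ 0) :
    ∃ p ∈ signPair a G, ∃ M : Matrix (Fin n) (Fin n) ℤ, M.det = 1 ∧ a' = p.1 ∧
      G' = matAct M p.2 := by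
  obtain ⟨hdet, ha', hG'⟩ :=
    eq_matAct_submatrix_of_matAct_splitCubic (hγ ▸ isUnit_one) h hG hnd ha h00
  rw [hγ] at hdet
  rcases Int.eq_one_or_neg_one_of_mul_eq_one' hdet.symm with ⟨h1, hM⟩ | ⟨h1, hM⟩
  · exact ⟨_, Or.inl rfl, _, hM, by rw [ha', h1]; ring, hG'⟩
  · have hn : n ≠ 0 := by
      rintro rfl
      simp at hM
    refine ⟨_, Or.inr rfl, signFlip n * γ.submatrix Fin.succ Fin.succ, ?_, ?_, ?_⟩
    · rw [Matrix.det_mul, det_signFlip hn, hM]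
      norm_num
    · rw [ha', h1]
      ring
    · rw [matAct_matAct, ← Matrix.mul_assoc, signFlip_mul_self, Matrix.one_mul, hG']

theorem exists_mul_eq_of_dvd_sub {ι : Type*} [Fintype ι] [DecidableEq ι] {r : ℤ} (hr : r ≠ 0)
    {T₀ T : Matrix ι ι ℤ} (h₀ : T₀.det = r) (hT : T.det = r)
    (hdvd : ∀ i j, 2 * r ∣ T i j - T₀ i j) :
    ∃ γ : Matrix ι ι ℤ, T₀ * γ = T ∧ γ.det = 1 ∧ ∀ i, Odd (γ i i) := by
  choose S hS using hdvd
  have hprod : T₀ * (1 + (2 : ℤ) • (T₀.adjugate * Matrix.of S)) = T := by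
    rw [Matrix.mul_add, Matrix.mul_one, Matrix.mul_smul, ← Matrix.mul_assoc, Matrix.mul_adjugate,
      h₀, Matrix.smul_mul, Matrix.one_mul, smul_smul]
    ext i j
    simp only [Matrix.add_apply, Matrix.smul_apply, Matrix.of_apply, smul_eq_mul]
    linarith [hS i j]
  refine ⟨_, hprod, ?_, fun i => ⟨(T₀.adjugate * Matrix.of S) i i, ?_⟩⟩
  · have hdet := congrArg Matrix.det hprod
    rw [Matrix.det_mul, h₀, hT] at hdet
    exact mul_left_cancel₀ hr (hdet.trans (mul_one r).symm)
  · rw [Matrix.add_apply, Matrix.smul_apply, Matrix.one_apply_eq, smul_eq_mul, add_comm]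

theorem dvd_sub_of_map_intCast_eq {ι : Type*} {N : ℤ} {A B : Matrix ι ι ℤ}
    (h : A.map (Int.cast : ℤ → ZMod N.natAbs) = B.map Int.cast) (i j : ι) :
    N ∣ B i j - A i j := by
  have hij := congrFun (congrFun h i) j
  rwa [Matrix.map_apply, Matrix.map_apply, ZMod.intCast_eq_intCast_iff_dvd_sub,
    Int.natCast_natAbs, abs_dvd] at hij

theorem smoothHyp_map_matAct {m : ℕ} {T : Matrix (Fin m) (Fin m) ℤ} (hT : T.det ≠ 0)
    {P : MvPolynomial (Fin m) ℤ} (h : smoothHyp (P.map (Int.castRingHom ℂ))) :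
    smoothHyp ((matAct T P).map (Int.castRingHom ℂ)) := by
  rw [map_matAct]
  refine smoothHyp_matAct ?_ h
  rw [← RingHom.mapMatrix_apply, ← RingHom.map_det]
  simpa using hT

structure IsSplitting {n : ℕ} (F : MvPolynomial (Fin (n + 1)) ℤ) (r : ℤ)
    (T : Matrix (Fin (n + 1)) (Fin (n + 1)) ℤ) (a : ℤ) (G : MvPolynomial (Fin n) ℤ) : Prop where
  det_eq : T.det = r
  isHomogeneous : G.IsHomogeneous 3
  nondeg : nondeg G
  matAct_eq : matAct T F = splitCubic a G

namespace IsSplitting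

variable {n : ℕ} {F : MvPolynomial (Fin (n + 1)) ℤ} {r : ℤ}
  {T₀ T : Matrix (Fin (n + 1)) (Fin (n + 1)) ℤ} {a₀ a : ℤ} {G₀ G : MvPolynomial (Fin n) ℤ}

theorem ne_zero_and_smoothHyp (hsm : smoothHyp (F.map (Int.castRingHom ℂ))) (hr : r ≠ 0)
    (h : IsSplitting F r T a G) : a ≠ 0 ∧ smoothHyp (G.map (Int.castRingHom ℂ)) := by
  have hsplit := smoothHyp_map_matAct (h.det_eq ▸ hr) hsm
  rw [h.matAct_eq, map_splitCubic] at hsplit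
  obtain ⟨ha, hG⟩ := smoothHyp_of_smoothHyp_splitCubic (h.isHomogeneous.map _) hsplit
  exact ⟨by simpa using ha, hG⟩

theorem isHomogeneous_and_smoothHyp_of_mem_signPair
    (hsm : smoothHyp (F.map (Int.castRingHom ℂ))) (hr : r ≠ 0) (h : IsSplitting F r T a G)
    {p : ℤ × MvPolynomial (Fin n) ℤ} (hp : p ∈ signPair a G) :
    p.2.IsHomogeneous 3 ∧ smoothHyp (p.2.map (Int.castRingHom ℂ)) := by
  have hsmooth := (h.ne_zero_and_smoothHyp hsm hr).2
  rcases hp with rfl | rfl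
  · exact ⟨h.isHomogeneous, hsmooth⟩
  · exact ⟨h.isHomogeneous.matAct _, smoothHyp_map_matAct (det_signFlip_ne_zero n) hsmooth⟩

theorem exists_mem_signPair_of_dvd_sub (hsm : smoothHyp (F.map (Int.castRingHom ℂ)))
    (hr : r ≠ 0) (h₀ : IsSplitting F r T₀ a₀ G₀) (h : IsSplitting F r T a G)
    (hdvd : ∀ i j, 2 * r ∣ T i j - T₀ i j) :
    ∃ p ∈ signPair a₀ G₀, ∃ M : Matrix (Fin n) (Fin n) ℤ, M.det = 1 ∧ a = p.1 ∧
      G = matAct M p.2 := by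
  obtain ⟨γ, hγT, hγ, hodd⟩ := exists_mul_eq_of_dvd_sub hr h₀.det_eq h.det_eq hdvd
  refine exists_mem_signPair_of_matAct_splitCubic hγ ?_ h₀.isHomogeneous h₀.nondeg
    (h₀.ne_zero_and_smoothHyp hsm hr).1 fun h00 => by simpa [h00] using hodd 0
  rw [← h₀.matAct_eq, matAct_matAct, hγT, h.matAct_eq]

end IsSplitting

theorem stmt12_general {n : ℕ} (F : MvPolynomial (Fin (n + 1)) ℤ)
    (hsm : smoothHyp (F.map (Int.castRingHom ℂ))) (r : ℤ) (hr : r ≠ 0) :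
    ∃ (k : ℕ) (a : Fin k → ℤ) (G : Fin k → MvPolynomial (Fin n) ℤ),
      (∀ i, (G i).IsHomogeneous 3 ∧ smoothHyp ((G i).map (Int.castRingHom ℂ))) ∧
      ∀ (T : Matrix (Fin (n + 1)) (Fin (n + 1)) ℤ) (a' : ℤ)
        (G' : MvPolynomial (Fin n) ℤ),
        T.det = r → G'.IsHomogeneous 3 → nondeg G' →
        matAct T F = C a' * X 0 ^ 3 + rename Fin.succ G' →
        ∃ (i : Fin k) (M : Matrix (Fin n) (Fin n) ℤ), M.det = 1 ∧
          a' = a i ∧ G' = matAct M (G i) := by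
  have : NeZero (2 * r).natAbs := ⟨by omega⟩
  let residue (T : Matrix (Fin (n + 1)) (Fin (n + 1)) ℤ) :=
    T.map (Int.cast : ℤ → ZMod (2 * r).natAbs)
  let Realized := {ρ // ∃ T a G, residue T = ρ ∧ IsSplitting F r T a G}
  choose T₀ a₀ G₀ hres h₀ using fun ρ : Realized => ρ.2
  have hfin : (⋃ ρ, signPair (a₀ ρ) (G₀ ρ)).Finite :=
    Set.finite_iUnion fun _ => (Set.finite_singleton _).insert _
  obtain ⟨k, f, hf⟩ := hfin.fin_embedding
  refine ⟨k, fun i => (f i).1, fun i => (f i).2, fun i => ?_, fun T a G hT hG hnd hF => ?_⟩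
  · obtain ⟨ρ, hρ⟩ := Set.mem_iUnion.mp (hf ▸ Set.mem_range_self i)
    exact (h₀ ρ).isHomogeneous_and_smoothHyp_of_mem_signPair hsm hr hρ
  · have hT' : IsSplitting F r T a G := ⟨hT, hG, hnd, hF⟩
    let ρ : Realized := ⟨residue T, T, a, G, rfl, hT'⟩
    obtain ⟨p, hp, M, hM, ha, hG'⟩ := (h₀ ρ).exists_mem_signPair_of_dvd_sub hsm hr hT'
      (dvd_sub_of_map_intCast_eq (B := T) (hres ρ))
    obtain ⟨i, rfl⟩ : p ∈ Set.range f := hf ▸ Set.mem_iUnion.mpr ⟨ρ, hp⟩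
    exact ⟨i, M, hM, ha, hG'⟩

/-- Proposition 3.22. Let `F ∈ ℤ[x₀,…,xₙ]` be a non-degenerate
cubic form with `{F = 0}` smooth and fix a nonzero integer `r`. Then there are
finitely many pairs `(aᵢ, Gᵢ)` such that whenever an integral matrix `T` with
`det T = r` satisfies `T·F = a·x₀³ + G(x₁,…,xₙ)` with `G` a non-degenerate cubic
form, we have `a = aᵢ` and `G = M·Gᵢ` for some `i` and `M ∈ SL(n, ℤ)`; moreover
each `{Gᵢ = 0}` is smooth. -/
theorem stmt12 {n : ℕ} (F : MvPolynomial (Fin (n + 1)) ℤ)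
    (hF3 : F.IsHomogeneous 3) (hnd : nondeg F)
    (hsm : smoothHyp (F.map (Int.castRingHom ℂ))) (r : ℤ) (hr : r ≠ 0) :
    ∃ (k : ℕ) (a : Fin k → ℤ) (G : Fin k → MvPolynomial (Fin n) ℤ),
      (∀ i, (G i).IsHomogeneous 3 ∧ smoothHyp ((G i).map (Int.castRingHom ℂ))) ∧
      ∀ (T : Matrix (Fin (n + 1)) (Fin (n + 1)) ℤ) (a' : ℤ)
        (G' : MvPolynomial (Fin n) ℤ),
        T.det = r → G'.IsHomogeneous 3 → nondeg G' →
        matAct T F = C a' * X 0 ^ 3 + rename Fin.succ G' →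
        ∃ (i : Fin k) (M : Matrix (Fin n) (Fin n) ℤ), M.det = 1 ∧
          a' = a i ∧ G' = matAct M (G i) :=
  stmt12_general F hsm r hr
end
end

section
/- Let F = x₄·x₃² + x₃·x₁·x₀ + x₂·x₁² ∈ ℂ[x₀,x₁,x₂,x₃,x₄]. Then the set W_F = {p ∈ ℙ⁴(ℂ) : rk 𝓗_F(p) ≤ 1} is infinite. -/
open MvPolynomial

noncomputable section

lemma pd_two (i : Fin 5) : pderiv i (2 : MvPolynomial (Fin 5) ℂ) = 0 := by
  have : (2 : MvPolynomial (Fin 5) ℂ) = C 2 := (map_ofNat C 2).symm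
  rw [this, pderiv_C]
set_option maxHeartbeats 1000000 in
lemma hessF (x : Fin 5 → ℂ) :
    hess (X 4 * X 3 ^ 2 + X 3 * X 1 * X 0 + X 2 * X 1 ^ 2 : MvPolynomial (Fin 5) ℂ) x
      = Matrix.of ![![0, x 3, 0, x 1, 0], ![x 3, 2*x 2, 2*x 1, x 0, 0],
      ![0, 2*x 1, 0, 0, 0], ![x 1, x 0, 0, 2*x 4, 2*x 3], ![0, 0, 0, 2*x 3, 0]] := by
  ext i j
  fin_cases i <;> fin_cases j <;>
    simp [hess, pderiv_X, Pi.single_apply, pd_two, Matrix.vecHead, Matrix.vecTail] <;> ring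

def vv (t : ℂ) : Fin 5 → ℂ := ![2*t, 0, t^2, 0, 1]

lemma vv_ne (t : ℂ) : vv t ≠ 0 := by
  intro h
  have := congrFun h 4
  simp [vv] at this

/-- Remark 3.4. For the degenerate cubic form
`F = x₄x₃² + x₃x₁x₀ + x₂x₁²`, the set `W_F = {p ∈ ℙ⁴(ℂ) : rk 𝓗_F(p) ≤ 1}`
is infinite. -/
theorem stmt15 (F : MvPolynomial (Fin 5) ℂ)
    (hF : F = X 4 * X 3 ^ 2 + X 3 * X 1 * X 0 + X 2 * X 1 ^ 2) :
    {p : Projectivization ℂ (Fin 5 → ℂ) | (hess F p.rep).rank ≤ 1}.Infinite := by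
  subst hF
  apply Set.infinite_of_injective_forall_mem
    (f := fun t : ℂ => Projectivization.mk ℂ (vv t) (vv_ne t))
  · intro s t hst
    rw [Projectivization.mk_eq_mk_iff] at hst
    obtain ⟨a, ha⟩ := hst
    have h4 := congrFun ha 4
    have h0 := congrFun ha 0
    simp [vv, Units.smul_def] at h4 h0
    rw [h4] at h0
    have : 2 * t = 2 * s := by simpa using h0
    exact (mul_left_cancel₀ two_ne_zero this).symm
  · intro t
    simp only [Set.mem_setOf_eq]
    have hmk : Projectivization.mk ℂ
        (Projectivization.mk ℂ (vv t) (vv_ne t)).rep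
        (Projectivization.mk ℂ (vv t) (vv_ne t)).rep_nonzero
        = Projectivization.mk ℂ (vv t) (vv_ne t) := Projectivization.mk_rep _
    rw [Projectivization.mk_eq_mk_iff] at hmk
    obtain ⟨a, ha⟩ := hmk
    rw [← ha]
    have key : hess (X 4 * X 3 ^ 2 + X 3 * X 1 * X 0 + X 2 * X 1 ^ 2 : MvPolynomial (Fin 5) ℂ)
        (a • vv t) = Matrix.vecMulVec ![0, 2*(a:ℂ)*t, 0, 2*(a:ℂ), 0] ![0, t, 0, 1, 0] := by
      rw [hessF]
      ext i j
      fin_cases i <;> fin_cases j <;>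
        simp [Matrix.vecMulVec, vv, Units.smul_def, Pi.smul_apply, smul_eq_mul,
          Matrix.vecHead, Matrix.vecTail] <;> ring
    rw [key, Matrix.vecMulVec_eq (Fin 1)]
    exact le_trans (Matrix.rank_mul_le_left _ _)
      (le_trans (Matrix.rank_le_card_width _) (by simp))
end
end

section
/- Let n ≥ 3 and let F(x₀,…,xₙ) = x₀³ + x₀·x₁² + x₁·(Σᵢ₌₂ⁿ xᵢ²) ∈ ℂ[x₀,…,xₙ]. Then every point p ∈ ℙⁿ(ℂ) with homogeneous coordinates satisfying x₀ = x₁ = 0 lies in V_F, i.e. rk 𝓗_F(p) ≤ 2; in particular V_F contains the (n−2)-dimensional linear subspace {x₀ = x₁ = 0} of ℙⁿ(ℂ). -/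
open MvPolynomial

noncomputable section

/-!
Write `F = x₀ (x₀² + x₁²) + x₁ S` with `S = ∑_{i ≥ 2} xᵢ²`. At a point `x` with `x_k = 0` the
Hessian of `x_k G` is `e_k ∇G(x)ᵀ + ∇G(x) e_kᵀ`. When `x₀ = x₁ = 0` the gradient of `x₀² + x₁²`
vanishes, so `𝓗_F(x) = e₁ ∇S(x)ᵀ + ∇S(x) e₁ᵀ` is a sum of two matrices of rank at most one.
-/

theorem Matrix.rank_add_le {m n K : Type*} [Fintype n] [Field K] (A B : Matrix m n K) :
    (A + B).rank ≤ A.rank + B.rank := by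
  unfold Matrix.rank
  calc Module.finrank K (LinearMap.range (A + B).mulVecLin)
      ≤ Module.finrank K ↥(LinearMap.range A.mulVecLin ⊔ LinearMap.range B.mulVecLin) := by
        refine Submodule.finrank_mono ?_
        rw [Matrix.mulVecLin_add]
        exact LinearMap.range_add_le _ _
    _ ≤ _ := Submodule.finrank_add_le_finrank_add_finrank _ _

theorem Matrix.rank_vecMulVec_add_vecMulVec_le {m n K : Type*} [Fintype n] [Field K]
    (u w : m → K) (v z : n → K) : (vecMulVec u v + vecMulVec w z).rank ≤ 2 :=
  (Matrix.rank_add_le _ _).trans (add_le_add (rank_vecMulVec_le u v) (rank_vecMulVec_le w z))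

theorem hess_add {m : ℕ} {R : Type*} [CommSemiring R] (F G : MvPolynomial (Fin m) R)
    (x : Fin m → R) : hess (F + G) x = hess F x + hess G x := by
  ext i j
  simp [hess]

def grad {m : ℕ} {R : Type*} [CommSemiring R] (G : MvPolynomial (Fin m) R) (x : Fin m → R) :
    Fin m → R :=
  fun i => eval x (pderiv i G)

theorem hess_X_mul_of_eval_eq_zero {m : ℕ} {R : Type*} [CommSemiring R] (k : Fin m)
    (G : MvPolynomial (Fin m) R) {x : Fin m → R} (hx : x k = 0) :
    hess (X k * G) x = Matrix.vecMulVec (Pi.single k 1) (grad G x) +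
      Matrix.vecMulVec (grad G x) (Pi.single k 1) := by
  ext i j
  by_cases hi : i = k <;> by_cases hj : j = k <;>
    simp [hess, grad, Derivation.leibniz, pderiv_X, Pi.single_apply, hx, Matrix.vecMulVec_apply,
      hi, hj, eq_comm (a := k)]

theorem stmt16_general {n : ℕ} (F : MvPolynomial (Fin (n + 1)) ℂ)
    (hF : F = X 0 ^ 3 + X 0 * X 1 ^ 2 +
      X 1 * ∑ i ∈ Finset.univ.filter (fun i : Fin (n + 1) => 2 ≤ i.val), X i ^ 2) :
    ∀ x : Fin (n + 1) → ℂ, x 0 = 0 → x 1 = 0 → (hess F x).rank ≤ 2 := by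
  intro x h0 h1
  set S : MvPolynomial (Fin (n + 1)) ℂ :=
    ∑ i ∈ Finset.univ.filter (fun i : Fin (n + 1) => 2 ≤ i.val), X i ^ 2
  have hF' : F = X 0 * (X 0 ^ 2 + X 1 ^ 2) + X 1 * S := by rw [hF]; ring
  have hgrad : grad (X 0 ^ 2 + X 1 ^ 2 : MvPolynomial (Fin (n + 1)) ℂ) x = 0 := by
    ext i
    simp [grad, Derivation.leibniz_pow, h0, h1]
  rw [hF', hess_add, hess_X_mul_of_eval_eq_zero 0 _ h0, hess_X_mul_of_eval_eq_zero 1 _ h1, hgrad,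
    Matrix.vecMulVec_zero, Matrix.zero_vecMulVec, add_zero, zero_add]
  exact Matrix.rank_vecMulVec_add_vecMulVec_le _ _ _ _

/-- Remark 3.7. For `n ≥ 3` and
`F = x₀³ + x₀x₁² + x₁·(x₂² + ⋯ + xₙ²)`, every point of `ℙⁿ(ℂ)` with homogeneous
coordinates satisfying `x₀ = x₁ = 0` lies in `V_F`, i.e. the Hessian of `F` has
rank at most 2 there; so `V_F` contains the `(n−2)`-dimensional linear subspace
`{x₀ = x₁ = 0}`. -/
theorem stmt16 {n : ℕ} (hn : 3 ≤ n) (F : MvPolynomial (Fin (n + 1)) ℂ)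
    (hF : F = X 0 ^ 3 + X 0 * X 1 ^ 2 +
      X 1 * ∑ i ∈ Finset.univ.filter (fun i : Fin (n + 1) => 2 ≤ i.val), X i ^ 2) :
    ∀ x : Fin (n + 1) → ℂ, x 0 = 0 → x 1 = 0 → (hess F x).rank ≤ 2 :=
  stmt16_general F hF
end
end
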